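/- arXiv:2604.20322 — 3 statements merged into one kernel-verified Lean document; each statement's English description precedes it below -/
import Mathlib

section
/- Let F be the logistic function and let U ⊆ ℝ^{d-1} contain a nonempty open set. Suppose β₁ = (β₁₀, b₁), γ₁ = (γ₁₀, g₁), β₂ = (β₂₀, b₂), γ₂ = (γ₂₀, g₂) with b₁, g₁, b₁+g₁ pairwise distinct, and suppose F(β₁₀ + b₁ᵀw)F(γ₁₀ + g₁ᵀw) = F(β₂₀ + b₂ᵀw)F(γ₂₀ + g₂ᵀw) for all w ∈ U. Then either (β₁, γ₁) = (β₂, γ₂) or (β₁, γ₁) = (γ₂, β₂). -/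
noncomputable def F (μ : ℝ) : ℝ := Real.exp μ / (1 + Real.exp μ)

/-!
Since `1 / F μ = 1 + exp (-μ)`, the hypothesis says that the functions
`w ↦ (1 + exp (-β₀ - b ⬝ᵥ w)) (1 + exp (-γ₀ - g ⬝ᵥ w)) - 1`
agree on an open set, hence everywhere by analyticity. Expanded, such a function is the Laplace
transform of the positive weights `p δ_b + q δ_g + p q δ_{b+g}` with `p = exp (-β₀)`, `q = exp (-γ₀)`,
and exponentials with distinct frequencies are linearly independent, so the two weight systems
coincide. When `b`, `g`, `b + g` are distinct, the support `{b, g, b + g}` determines `b + g`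
(half the sum of its elements), hence the pair `{b, g}`, and the weights then give the intercepts.
-/

open Real Finsupp

theorem inv_F (a : ℝ) : (F a)⁻¹ = 1 + exp (-a) := by
  rw [F, inv_div, exp_neg]
  field_simp
  ring

theorem inv_F_mul_F_sub_one (a b : ℝ) :
    (F a * F b)⁻¹ - 1 = exp (-a) + exp (-b) + exp (-a) * exp (-b) := by
  rw [mul_inv, inv_F, inv_F]
  ring

theorem Finset.ne_of_card_triple_eq_three {α : Type*} [DecidableEq α] {x y z : α}
    (h : ({x, y, z} : Finset α).card = 3) : x ≠ y ∧ x ≠ z ∧ y ≠ z := by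
  refine ⟨?_, ?_, ?_⟩ <;> rintro rfl <;> grind [Finset.card_le_two]

section Laplace

variable {ι : Type*} [Fintype ι]

theorem analyticAt_exp_neg_dotProduct (v w : ι → ℝ) :
    AnalyticAt ℝ (fun x => exp (-(v ⬝ᵥ x))) w :=
  (LinearMap.toContinuousLinearMap (dotProductBilin ℝ ℝ v)).analyticAt w |>.neg.rexp

theorem linearIndependent_exp_neg_dotProduct :
    LinearIndependent ℝ fun (v w : ι → ℝ) => exp (-(v ⬝ᵥ w)) := by
  classical
  let χ (v : ι → ℝ) : Multiplicative (ι → ℝ) →* ℝ :=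
    { toFun w := exp (-(v ⬝ᵥ w.toAdd))
      map_one' := by simp
      map_mul' x y := by simp [dotProduct_add, exp_add, mul_comm] }
  have hχ : Function.Injective χ := fun v v' h => funext fun i => by
    simpa [χ, dotProduct_single] using DFunLike.congr_fun h (Multiplicative.ofAdd (Pi.single i 1))
  exact (linearIndependent_monoidHom _ ℝ).comp χ hχ

noncomputable def laplace : ((ι → ℝ) →₀ ℝ) →ₗ[ℝ] (ι → ℝ) → ℝ :=
  linearCombination ℝ fun v w => exp (-(v ⬝ᵥ w))

theorem laplace_single (v : ι → ℝ) (a : ℝ) (w : ι → ℝ) :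
    laplace (single v a) w = a * exp (-(v ⬝ᵥ w)) := by
  simp [laplace]

theorem analyticOnNhd_laplace (ν : (ι → ℝ) →₀ ℝ) : AnalyticOnNhd ℝ (laplace ν) Set.univ := by
  rw [laplace, linearCombination_apply, Finsupp.sum]
  exact Finset.analyticOnNhd_sum _ fun v _ w _ => (analyticAt_exp_neg_dotProduct v w).const_smul

theorem eq_of_eqOn_laplace {ν ν' : (ι → ℝ) →₀ ℝ} {V : Set (ι → ℝ)} (hV : IsOpen V)
    (hVne : V.Nonempty) (h : Set.EqOn (laplace ν) (laplace ν') V) : ν = ν' := by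
  obtain ⟨w₀, hw₀⟩ := hVne
  have hglobal := (analyticOnNhd_laplace ν).eqOn_of_preconnected_of_eventuallyEq
    (analyticOnNhd_laplace ν') isPreconnected_univ (Set.mem_univ w₀)
    (Filter.eventuallyEq_of_mem (hV.mem_nhds hw₀) h)
  exact linearIndependent_exp_neg_dotProduct (funext fun w => hglobal (Set.mem_univ w))

end Laplace

section PairWeights

variable {G : Type*}

/-- The coefficients of `(1 + p X ^ b) * (1 + q X ^ g) - 1` in the group algebra of `G`. -/
noncomputable def pairWeights [AddCommMonoid G] (b g : G) (p q : ℝ) : G →₀ ℝ :=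
  single b p + single g q + single (b + g) (p * q)

section AddCommMonoid

variable [AddCommMonoid G]

theorem pairWeights_comm (b g : G) (p q : ℝ) : pairWeights b g p q = pairWeights g b q p := by
  rw [pairWeights, pairWeights, add_comm g b, mul_comm q p, add_comm (single g q)]

theorem support_pairWeights [DecidableEq G] (b g : G) {p q : ℝ} (hp : 0 < p) (hq : 0 < q) :
    (pairWeights b g p q).support = {b, g, b + g} := by
  ext x
  rw [mem_support_iff, pairWeights, Finsupp.add_apply, Finsupp.add_apply, single_apply,
    single_apply, single_apply, Ne,
    add_eq_zero_iff_of_nonneg (by positivity) (by positivity),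
    add_eq_zero_iff_of_nonneg (by positivity) (by positivity)]
  simp only [ite_eq_right_iff, hp.ne', hq.ne', imp_false, mul_eq_zero, or_self, not_and,
    Decidable.not_not, and_imp, Finset.mem_insert, Finset.mem_singleton]
  grind

theorem weights_eq_of_pairWeights_eq {b g : G} {p q p' q' : ℝ} (hbg : b ≠ g) (hb : b ≠ b + g)
    (hg : g ≠ b + g) (h : pairWeights b g p q = pairWeights b g p' q') : p = p' ∧ q = q' := by
  refine ⟨?_, ?_⟩
  · simpa [pairWeights, hbg.symm, hb.symm] using DFunLike.congr_fun h b
  · simpa [pairWeights, hbg, hg.symm] using DFunLike.congr_fun h g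

end AddCommMonoid

section AddCommGroup

variable [AddCommGroup G] [IsAddTorsionFree G]

theorem eq_or_swap_of_triple_eq [DecidableEq G] {b g b' g' : G} (hbg : b ≠ g) (hb : b ≠ b + g)
    (hg : g ≠ b + g) (h : ({b, g, b + g} : Finset G) = {b', g', b' + g'}) :
    (b = b' ∧ g = g') ∨ (b = g' ∧ g = b') := by
  obtain ⟨hbg', hb', hg'⟩ := Finset.ne_of_card_triple_eq_three
    (h ▸ Finset.card_eq_three.mpr ⟨b, g, b + g, hbg, hb, hg, rfl⟩)
  have hsum : b + g = b' + g' := by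
    have := congrArg (fun s : Finset G => ∑ x ∈ s, x) h
    simp only [Finset.sum_insert, Finset.mem_insert, Finset.mem_singleton, Finset.sum_singleton,
      hbg, hb, hg, hbg', hb', hg', or_self, not_false_eq_true] at this
    apply nsmul_right_injective (M := G) two_ne_zero
    show 2 • (b + g) = 2 • (b' + g')
    convert this using 1 <;> abel
  have hmem : b ∈ ({b', g', b' + g'} : Finset G) := h ▸ Finset.mem_insert_self _ _
  simp only [Finset.mem_insert, Finset.mem_singleton] at hmem
  rcases hmem with rfl | rfl | hb''
  · exact Or.inl ⟨rfl, add_left_cancel hsum⟩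
  · exact Or.inr ⟨rfl, add_left_cancel (hsum.trans (add_comm _ _))⟩
  · exact absurd (hb''.trans hsum.symm) hb

theorem eq_or_swap_of_pairWeights_eq {b g b' g' : G} {p q p' q' : ℝ} (hp : 0 < p) (hq : 0 < q)
    (hp' : 0 < p') (hq' : 0 < q') (hbg : b ≠ g) (hb : b ≠ b + g) (hg : g ≠ b + g)
    (h : pairWeights b g p q = pairWeights b' g' p' q') :
    (b = b' ∧ g = g' ∧ p = p' ∧ q = q') ∨ (b = g' ∧ g = b' ∧ p = q' ∧ q = p') := by
  classical
  have hsupp := congrArg Finsupp.support h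
  rw [support_pairWeights b g hp hq, support_pairWeights b' g' hp' hq'] at hsupp
  rcases eq_or_swap_of_triple_eq hbg hb hg hsupp with ⟨rfl, rfl⟩ | ⟨rfl, rfl⟩
  · exact Or.inl ⟨rfl, rfl, weights_eq_of_pairWeights_eq hbg hb hg h⟩
  · rw [pairWeights_comm _ _ p' q'] at h
    exact Or.inr ⟨rfl, rfl, weights_eq_of_pairWeights_eq hbg hb hg h⟩

end AddCommGroup

end PairWeights

theorem laplace_pairWeights {ι : Type*} [Fintype ι] (β₀ γ₀ : ℝ) (b g w : ι → ℝ) :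
    laplace (pairWeights b g (exp (-β₀)) (exp (-γ₀))) w =
      (F (β₀ + b ⬝ᵥ w) * F (γ₀ + g ⬝ᵥ w))⁻¹ - 1 := by
  simp only [pairWeights, map_add, Pi.add_apply, laplace_single, inv_F_mul_F_sub_one,
    add_dotProduct, neg_add, exp_add]
  ring

theorem shared_design_identifiability {k : ℕ}
    (β₁₀ γ₁₀ β₂₀ γ₂₀ : ℝ) (b₁ g₁ b₂ g₂ : Fin k → ℝ)
    (h1 : b₁ ≠ g₁) (h2 : b₁ ≠ b₁ + g₁) (h3 : g₁ ≠ b₁ + g₁)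
    (U V : Set (Fin k → ℝ)) (hV : IsOpen V) (hVne : V.Nonempty) (hVU : V ⊆ U)
    (heq : ∀ w ∈ U,
      F (β₁₀ + ∑ l, b₁ l * w l) * F (γ₁₀ + ∑ l, g₁ l * w l) =
      F (β₂₀ + ∑ l, b₂ l * w l) * F (γ₂₀ + ∑ l, g₂ l * w l)) :
    (β₁₀ = β₂₀ ∧ b₁ = b₂ ∧ γ₁₀ = γ₂₀ ∧ g₁ = g₂) ∨
    (β₁₀ = γ₂₀ ∧ b₁ = g₂ ∧ γ₁₀ = β₂₀ ∧ g₁ = b₂) := by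
  have hν : pairWeights b₁ g₁ (exp (-β₁₀)) (exp (-γ₁₀)) =
      pairWeights b₂ g₂ (exp (-β₂₀)) (exp (-γ₂₀)) :=
    eq_of_eqOn_laplace hV hVne fun w hw => by
      rw [laplace_pairWeights, laplace_pairWeights]
      exact congrArg (·⁻¹ - 1) (heq w (hVU hw))
  rcases eq_or_swap_of_pairWeights_eq (exp_pos _) (exp_pos _) (exp_pos _) (exp_pos _) h1 h2 h3 hν
    with ⟨hb, hg, hβ, hγ⟩ | ⟨hb, hg, hβ, hγ⟩
  · exact Or.inl ⟨by simpa using hβ, hb, by simpa using hγ, hg⟩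
  · exact Or.inr ⟨by simpa using hβ, hb, by simpa using hγ, hg⟩
end

section
/- Let F be the logistic function and let data (yᵢ, xᵢ, zᵢ), i = 1,…,n, with yᵢ ∈ {0,1}, xᵢ ∈ ℝ^d, zᵢ ∈ ℝ^p satisfy double separation: there exist nonzero v ∈ ℝ^d, w ∈ ℝ^p with vᵀxᵢ ≥ 0 and wᵀzᵢ ≥ 0 whenever yᵢ = 1, vᵀxᵢ ≤ 0 and wᵀzᵢ ≤ 0 whenever yᵢ = 0, and at least one observation j with (vᵀxⱼ, wᵀzⱼ) ≠ (0,0). Then for every (β, γ) ∈ ℝ^d × ℝ^p and every t ≥ 0, the derivative in t of L(β + tv, γ + tw) is strictly positive, where L(β,γ) = ∑ᵢ [yᵢ log(F(γᵀzᵢ)F(βᵀxᵢ)) + (1-yᵢ) log(1 - F(γᵀzᵢ)F(βᵀxᵢ))]. -/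
noncomputable def L {n d p : ℕ} (y : Fin n → ℝ) (x : Fin n → Fin d → ℝ)
    (z : Fin n → Fin p → ℝ) (β : Fin d → ℝ) (γ : Fin p → ℝ) : ℝ :=
  ∑ i, (y i * Real.log (F (∑ l, γ l * z i l) * F (∑ l, β l * x i l))
    + (1 - y i) * Real.log (1 - F (∑ l, γ l * z i l) * F (∑ l, β l * x i l)))

/-!
Each observation contributes `g_y(q) = y log q + (1 - y) log (1 - q)` evaluated at the
success probability `q = F(γᵀz) F(βᵀx)`. Since `F' = F (1 - F)`, moving along `(v, w)`
changes `q` at the rate `q ((1 - F(γᵀz)) wᵀz + (1 - F(βᵀx)) vᵀx)`, and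
`g_y'(q) = (y - q) / (q (1 - q))`. So the derivative of the contribution is
`(y - q) / (1 - q)` times a positive combination of `vᵀx` and `wᵀz`. Double separation makes
both factors have the sign of `2y - 1`, so every contribution is nonnegative, and the one of
an observation `j` with `(vᵀxⱼ, wᵀzⱼ) ≠ 0` is positive.
-/

open Real Matrix

lemma F_pos (μ : ℝ) : 0 < F μ := by
  unfold F
  positivity

lemma F_lt_one (μ : ℝ) : F μ < 1 :=
  (div_lt_one (by positivity)).2 (lt_one_add _)

lemma hasDerivAt_F (μ : ℝ) : HasDerivAt F (F μ * (1 - F μ)) μ := by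
  have hden : 1 + exp μ ≠ 0 := by positivity
  refine ((hasDerivAt_exp μ).div ((hasDerivAt_exp μ).const_add 1) hden).congr_deriv ?_
  unfold F
  field_simp

lemma hasDerivAt_F_comp_affine (a b t : ℝ) :
    HasDerivAt (fun s => F (a + s * b)) (F (a + t * b) * (1 - F (a + t * b)) * b) t := by
  have hline : HasDerivAt (fun s : ℝ => a + s * b) b t := by
    simpa using ((hasDerivAt_id t).mul_const b).const_add a
  exact (hasDerivAt_F (a + t * b)).comp t hline

noncomputable def bernoulliLogLik (y q : ℝ) : ℝ := y * log q + (1 - y) * log (1 - q)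

lemma hasDerivAt_bernoulliLogLik (y : ℝ) {q : ℝ} (hq0 : 0 < q) (hq1 : q < 1) :
    HasDerivAt (bernoulliLogLik y) ((y - q) / (q * (1 - q))) q := by
  have hq1' : 1 - q ≠ 0 := by linarith
  have hlog1 : HasDerivAt (fun r => log (1 - r)) (-1 / (1 - q)) q := by
    simpa using ((hasDerivAt_id q).const_sub 1).log hq1'
  refine (((hasDerivAt_log hq0.ne').const_mul y).add (hlog1.const_mul (1 - y))).congr_deriv ?_
  field_simp
  ring

lemma hasDerivAt_bernoulliLogLik_F_mul_F (y a b c e t : ℝ) :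
    HasDerivAt (fun s => bernoulliLogLik y (F (c + s * e) * F (a + s * b)))
      ((y - F (c + t * e) * F (a + t * b)) / (1 - F (c + t * e) * F (a + t * b))
        * ((1 - F (c + t * e)) * e + (1 - F (a + t * b)) * b)) t := by
  set U := F (c + t * e)
  set V := F (a + t * b)
  have hU0 : 0 < U := F_pos _
  have hV0 : 0 < V := F_pos _
  have hUV1 : U * V < 1 := by nlinarith [F_lt_one (c + t * e), F_lt_one (a + t * b)]
  have hUV1' : 1 - U * V ≠ 0 := by linarith
  refine ((hasDerivAt_bernoulliLogLik y (by positivity) hUV1).comp t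
    ((hasDerivAt_F_comp_affine c e t).mul (hasDerivAt_F_comp_affine a b t))).congr_deriv ?_
  field_simp
  ring

lemma add_pos_of_nonneg_of_ne_zero {α β b e : ℝ} (hα : 0 < α) (hβ : 0 < β) (hb : 0 ≤ b)
    (he : 0 ≤ e) (hbe : (b, e) ≠ (0, 0)) : 0 < α * e + β * b := by
  rcases hb.eq_or_lt with rfl | hb
  · have he : 0 < e := he.lt_of_ne (by rintro rfl; exact hbe rfl)
    simpa using mul_pos hα he
  · nlinarith

section Score

variable {y U V b e : ℝ}

lemma score_mul_nonneg (hU0 : 0 < U) (hU1 : U < 1) (hV0 : 0 < V) (hV1 : V < 1)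
    (hy : y = 0 ∨ y = 1) (h1 : y = 1 → 0 ≤ b ∧ 0 ≤ e) (h0 : y = 0 → b ≤ 0 ∧ e ≤ 0) :
    0 ≤ (y - U * V) / (1 - U * V) * ((1 - U) * e + (1 - V) * b) := by
  have hUV1 : 0 < 1 - U * V := by nlinarith
  rcases hy with rfl | rfl
  · obtain ⟨hb, he⟩ := h0 rfl
    refine mul_nonneg_of_nonpos_of_nonpos
      (div_nonpos_of_nonpos_of_nonneg (by nlinarith) hUV1.le) ?_
    nlinarith
  · obtain ⟨hb, he⟩ := h1 rfl
    rw [div_self hUV1.ne', one_mul]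
    nlinarith

lemma score_mul_pos (hU0 : 0 < U) (hU1 : U < 1) (hV0 : 0 < V) (hV1 : V < 1)
    (hy : y = 0 ∨ y = 1) (h1 : y = 1 → 0 ≤ b ∧ 0 ≤ e) (h0 : y = 0 → b ≤ 0 ∧ e ≤ 0)
    (hbe : (b, e) ≠ (0, 0)) :
    0 < (y - U * V) / (1 - U * V) * ((1 - U) * e + (1 - V) * b) := by
  have hUV1 : 0 < 1 - U * V := by nlinarith
  have hU1' : 0 < 1 - U := by linarith
  have hV1' : 0 < 1 - V := by linarith
  rcases hy with rfl | rfl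
  · obtain ⟨hb, he⟩ := h0 rfl
    have hneg : (-b, -e) ≠ (0, 0) := by simpa using hbe
    have := add_pos_of_nonneg_of_ne_zero hU1' hV1' (neg_nonneg.2 hb) (neg_nonneg.2 he)
      hneg
    refine mul_pos_of_neg_of_neg (div_neg_of_neg_of_pos (by nlinarith) hUV1) ?_
    linarith
  · obtain ⟨hb, he⟩ := h1 rfl
    rw [div_self hUV1.ne', one_mul]
    exact add_pos_of_nonneg_of_ne_zero hU1' hV1' hb he hbe

end Score

lemma L_eq_sum_bernoulliLogLik {n d p : ℕ} (y : Fin n → ℝ) (x : Fin n → Fin d → ℝ)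
    (z : Fin n → Fin p → ℝ) (β : Fin d → ℝ) (γ : Fin p → ℝ) :
    L y x z β γ = ∑ i, bernoulliLogLik (y i) (F (γ ⬝ᵥ z i) * F (β ⬝ᵥ x i)) :=
  rfl

theorem loglik_increases_along_separating_direction_general {n d p : ℕ}
    (y : Fin n → ℝ) (x : Fin n → Fin d → ℝ) (z : Fin n → Fin p → ℝ)
    (hy : ∀ i, y i = 0 ∨ y i = 1)
    (v : Fin d → ℝ) (w : Fin p → ℝ)
    (hsep1 : ∀ i, y i = 1 → 0 ≤ (∑ l, v l * x i l) ∧ 0 ≤ (∑ l, w l * z i l))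
    (hsep0 : ∀ i, y i = 0 → (∑ l, v l * x i l) ≤ 0 ∧ (∑ l, w l * z i l) ≤ 0)
    (hstrict : ∃ j, ((∑ l, v l * x j l), (∑ l, w l * z j l)) ≠ (0, 0))
    (β : Fin d → ℝ) (γ : Fin p → ℝ) (t : ℝ) :
    0 < deriv (fun s => L y x z (β + s • v) (γ + s • w)) t := by
  have hline : (fun s => L y x z (β + s • v) (γ + s • w)) = fun s => ∑ i, bernoulliLogLik (y i)
      (F (γ ⬝ᵥ z i + s * w ⬝ᵥ z i) * F (β ⬝ᵥ x i + s * v ⬝ᵥ x i)) := by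
    funext s
    simp only [L_eq_sum_bernoulliLogLik, add_dotProduct, smul_dotProduct, smul_eq_mul]
  rw [hline, (HasDerivAt.fun_sum fun i _ =>
    hasDerivAt_bernoulliLogLik_F_mul_F (y i) _ _ _ _ t).deriv]
  obtain ⟨j, hj⟩ := hstrict
  refine Finset.sum_pos' (fun i _ => ?_) ⟨j, Finset.mem_univ j, ?_⟩
  · exact score_mul_nonneg (F_pos _) (F_lt_one _) (F_pos _) (F_lt_one _) (hy i) (hsep1 i)
      (hsep0 i)
  · exact score_mul_pos (F_pos _) (F_lt_one _) (F_pos _) (F_lt_one _) (hy j) (hsep1 j)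
      (hsep0 j) hj

theorem loglik_increases_along_separating_direction {n d p : ℕ}
    (y : Fin n → ℝ) (x : Fin n → Fin d → ℝ) (z : Fin n → Fin p → ℝ)
    (hy : ∀ i, y i = 0 ∨ y i = 1)
    (v : Fin d → ℝ) (w : Fin p → ℝ) (hv : v ≠ 0) (hw : w ≠ 0)
    (hsep1 : ∀ i, y i = 1 → 0 ≤ (∑ l, v l * x i l) ∧ 0 ≤ (∑ l, w l * z i l))
    (hsep0 : ∀ i, y i = 0 → (∑ l, v l * x i l) ≤ 0 ∧ (∑ l, w l * z i l) ≤ 0)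
    (hstrict : ∃ j, ((∑ l, v l * x j l), (∑ l, w l * z j l)) ≠ (0, 0))
    (β : Fin d → ℝ) (γ : Fin p → ℝ) (t : ℝ) (ht : 0 ≤ t) :
    0 < deriv (fun s => L y x z (β + s • v) (γ + s • w)) t :=
  loglik_increases_along_separating_direction_general y x z hy v w hsep1 hsep0 hstrict β γ t
end

section
/- If the dataset satisfies ε–double–non-separation for some ε > 0, then the zero-inflated logistic log-likelihood L(β, γ) attains a global maximum at some point of ℝ^d × ℝ^p. -/
/-!
Every summand of `L` is a log-probability, hence `≤ 0`. Given `(β, γ) ≠ 0` of Euclidean length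
`R`, non-separation applied to the unit direction `(β, γ) / R` singles out one observation whose
summand alone is `≤ log 2 - ε R`: for `y = 1` because `σ(t) ≤ eᵗ`, for `y = 0` because
`1 - σ(a)σ(b) ≤ σ(-a) + σ(-b) ≤ 2 e^{-min a b}`. So `L → -∞` at infinity, and a continuous
function on a finite-dimensional space with this property attains its maximum.
-/

open Real Filter Topology

lemma F_eq_sigmoid : F = sigmoid := by
  ext t
  rw [F, sigmoid_def, exp_neg, div_eq_inv_mul]
  field_simp
  ring

namespace Real

lemma sigmoid_le_exp (t : ℝ) : sigmoid t ≤ exp t := by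
  rw [sigmoid_def, inv_le_iff_one_le_mul₀ (by positivity), mul_add, ← exp_add]
  simp [(exp_pos t).le]

lemma sigmoid_mul_sigmoid_lt_one (a b : ℝ) : sigmoid a * sigmoid b < 1 :=
  mul_lt_one_of_nonneg_of_lt_one_left (sigmoid_nonneg a) (sigmoid_lt_one a) (sigmoid_le_one b)

end Real

lemma norm_le_sqrt_sum_sq {ι : Type*} [Fintype ι] (v : ι → ℝ) : ‖v‖ ≤ √(∑ l, v l ^ 2) :=
  (pi_norm_le_iff_of_nonneg (sqrt_nonneg _)).2 fun l => by
    rw [norm_eq_abs, ← sqrt_sq_eq_abs]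
    exact sqrt_le_sqrt (Finset.single_le_sum (fun j _ => sq_nonneg (v j)) (Finset.mem_univ l))

lemma norm_prod_le_sqrt_sum_sq {ι κ : Type*} [Fintype ι] [Fintype κ] (p : (ι → ℝ) × (κ → ℝ)) :
    ‖p‖ ≤ √((∑ l, p.1 l ^ 2) + ∑ l, p.2 l ^ 2) := by
  have h₁ : 0 ≤ ∑ l, p.1 l ^ 2 := Finset.sum_nonneg fun _ _ => sq_nonneg _
  have h₂ : 0 ≤ ∑ l, p.2 l ^ 2 := Finset.sum_nonneg fun _ _ => sq_nonneg _
  exact norm_prod_le_iff.2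
    ⟨(norm_le_sqrt_sum_sq p.1).trans (sqrt_le_sqrt (le_add_of_nonneg_right h₂)),
      (norm_le_sqrt_sum_sq p.2).trans (sqrt_le_sqrt (le_add_of_nonneg_left h₁))⟩

/-- The log-likelihood of one observation with response `y`, zero-inflation score `a`
and outcome score `b`. -/
noncomputable def logLik (y a b : ℝ) : ℝ :=
  y * log (sigmoid a * sigmoid b) + (1 - y) * log (1 - sigmoid a * sigmoid b)

lemma logLik_nonpos {y : ℝ} (hy : y ∈ Set.Icc 0 1) (a b : ℝ) : logLik y a b ≤ 0 := by
  have hpos : 0 < sigmoid a * sigmoid b := mul_pos (sigmoid_pos a) (sigmoid_pos b)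
  have hlt := sigmoid_mul_sigmoid_lt_one a b
  have h₁ : log (sigmoid a * sigmoid b) ≤ 0 := log_nonpos hpos.le hlt.le
  have h₂ : log (1 - sigmoid a * sigmoid b) ≤ 0 := log_nonpos (by linarith) (by linarith)
  exact add_nonpos (mul_nonpos_of_nonneg_of_nonpos hy.1 h₁)
    (mul_nonpos_of_nonneg_of_nonpos (sub_nonneg.2 hy.2) h₂)

lemma logLik_one_le (a b : ℝ) : logLik 1 a b ≤ a + b := by
  have hpos : 0 < sigmoid a * sigmoid b := mul_pos (sigmoid_pos a) (sigmoid_pos b)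
  calc logLik 1 a b = log (sigmoid a * sigmoid b) := by simp [logLik]
    _ ≤ log (exp a * exp b) :=
        log_le_log hpos (mul_le_mul (sigmoid_le_exp a) (sigmoid_le_exp b)
          (sigmoid_nonneg b) (exp_pos a).le)
    _ = a + b := by rw [← exp_add, log_exp]

lemma logLik_zero_le (a b : ℝ) : logLik 0 a b ≤ log 2 - min a b := by
  have hpos : 0 < 1 - sigmoid a * sigmoid b := sub_pos.2 (sigmoid_mul_sigmoid_lt_one a b)
  have hsplit : 1 - sigmoid a * sigmoid b ≤ sigmoid (-a) + sigmoid (-b) := by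
    rw [sigmoid_neg, sigmoid_neg]
    nlinarith [sigmoid_pos a, sigmoid_lt_one a, sigmoid_pos b, sigmoid_lt_one b]
  have hexp : sigmoid (-a) + sigmoid (-b) ≤ 2 * exp (-min a b) := by
    have ha := (sigmoid_le_exp (-a)).trans (exp_le_exp.2 (neg_le_neg (min_le_left a b)))
    have hb := (sigmoid_le_exp (-b)).trans (exp_le_exp.2 (neg_le_neg (min_le_right a b)))
    linarith
  calc logLik 0 a b = log (1 - sigmoid a * sigmoid b) := by simp [logLik]
    _ ≤ log (2 * exp (-min a b)) := log_le_log hpos (hsplit.trans hexp)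
    _ = log 2 - min a b := by rw [log_mul two_ne_zero (exp_ne_zero _), log_exp, sub_eq_add_neg]

lemma continuous_logLik (y : ℝ) : Continuous fun ab : ℝ × ℝ => logLik y ab.1 ab.2 := by
  have hσ : Continuous fun ab : ℝ × ℝ => sigmoid ab.1 * sigmoid ab.2 := by fun_prop
  refine (continuous_const.mul (hσ.log fun ab => ?_)).add
    (continuous_const.mul ((continuous_const.sub hσ).log fun ab => ?_))
  · exact (mul_pos (sigmoid_pos _) (sigmoid_pos _)).ne'
  · exact (sub_pos.2 (sigmoid_mul_sigmoid_lt_one _ _)).ne'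

def DoubleNonSeparated {n d q : ℕ} (y : Fin n → ℝ) (x : Fin n → Fin d → ℝ)
    (z : Fin n → Fin q → ℝ) (ε : ℝ) : Prop :=
  ∀ (v : Fin d → ℝ) (w : Fin q → ℝ),
    (∑ l, (v l) ^ 2) + (∑ l, (w l) ^ 2) = 1 →
    (∃ i, y i = 1 ∧ (∑ l, v l * x i l) + (∑ l, w l * z i l) ≤ -ε) ∨
    (∃ i, y i = 0 ∧ ε ≤ min (∑ l, v l * x i l) (∑ l, w l * z i l))

section Likelihood

variable {n d q : ℕ} (y : Fin n → ℝ) (x : Fin n → Fin d → ℝ) (z : Fin n → Fin q → ℝ)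

lemma L_eq_sum_logLik (β : Fin d → ℝ) (γ : Fin q → ℝ) :
    L y x z β γ = ∑ i, logLik (y i) (γ ⬝ᵥ z i) (β ⬝ᵥ x i) := by
  simp only [L, F_eq_sigmoid, logLik, dotProduct]

lemma continuous_L : Continuous fun p : (Fin d → ℝ) × (Fin q → ℝ) => L y x z p.1 p.2 := by
  simp only [L_eq_sum_logLik]
  exact continuous_finsetSum _ fun i _ =>
    (continuous_logLik (y i)).comp (by fun_prop : Continuous fun p : (Fin d → ℝ) × (Fin q → ℝ) =>
      (p.2 ⬝ᵥ z i, p.1 ⬝ᵥ x i))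

variable {y}

lemma L_nonpos (hy : ∀ i, y i ∈ Set.Icc 0 1) (β : Fin d → ℝ) (γ : Fin q → ℝ) :
    L y x z β γ ≤ 0 := by
  rw [L_eq_sum_logLik]
  exact Finset.sum_nonpos fun i _ => logLik_nonpos (hy i) _ _

lemma L_le_logLik (hy : ∀ i, y i ∈ Set.Icc 0 1) (β : Fin d → ℝ) (γ : Fin q → ℝ) (i : Fin n) :
    L y x z β γ ≤ logLik (y i) (γ ⬝ᵥ z i) (β ⬝ᵥ x i) := by
  rw [L_eq_sum_logLik, ← Finset.add_sum_erase _ _ (Finset.mem_univ i)]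
  exact add_le_of_nonpos_right (Finset.sum_nonpos fun j _ => logLik_nonpos (hy j) _ _)

lemma L_le_log_two_sub_mul_sqrt (hy : ∀ i, y i ∈ Set.Icc 0 1) {ε : ℝ}
    (hsep : DoubleNonSeparated y x z ε) (β : Fin d → ℝ) (γ : Fin q → ℝ) :
    L y x z β γ ≤ log 2 - ε * √((∑ l, (β l) ^ 2) + ∑ l, (γ l) ^ 2) := by
  set R := √((∑ l, (β l) ^ 2) + ∑ l, (γ l) ^ 2)
  have hlog2 : 0 ≤ log 2 := log_nonneg one_le_two
  rcases (sqrt_nonneg _ : 0 ≤ R).eq_or_lt with hR0 | hRpos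
  · rw [show R = 0 from hR0.symm, mul_zero, sub_zero]
    exact (L_nonpos x z hy β γ).trans hlog2
  have hsq : R ^ 2 = (∑ l, (β l) ^ 2) + ∑ l, (γ l) ^ 2 :=
    sq_sqrt (add_nonneg (Finset.sum_nonneg fun _ _ => sq_nonneg _)
      (Finset.sum_nonneg fun _ _ => sq_nonneg _))
  have hunit : (∑ l, ((R⁻¹ • β) l) ^ 2) + ∑ l, ((R⁻¹ • γ) l) ^ 2 = 1 := by
    simp only [Pi.smul_apply, smul_eq_mul, mul_pow, ← Finset.mul_sum, ← mul_add, ← hsq, inv_pow]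
    exact inv_mul_cancel₀ (pow_pos hRpos 2).ne'
  have hscale : ∀ {k : ℕ} (u v : Fin k → ℝ), ∑ l, (R⁻¹ • u) l * v l = R⁻¹ * (u ⬝ᵥ v) :=
    fun u v => smul_dotProduct R⁻¹ u v
  rcases hsep _ _ hunit with ⟨i, hyi, hle⟩ | ⟨i, hyi, hle⟩
  · rw [hscale, hscale, ← mul_add, inv_mul_le_iff₀ hRpos] at hle
    calc L y x z β γ ≤ logLik 1 (γ ⬝ᵥ z i) (β ⬝ᵥ x i) := hyi ▸ L_le_logLik x z hy β γ i
      _ ≤ γ ⬝ᵥ z i + β ⬝ᵥ x i := logLik_one_le _ _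
      _ ≤ log 2 - ε * R := by linarith
  · rw [hscale, hscale, ← mul_min_of_nonneg _ _ (inv_nonneg.2 hRpos.le), le_inv_mul_iff₀ hRpos] at hle
    calc L y x z β γ ≤ logLik 0 (γ ⬝ᵥ z i) (β ⬝ᵥ x i) := hyi ▸ L_le_logLik x z hy β γ i
      _ ≤ log 2 - min (γ ⬝ᵥ z i) (β ⬝ᵥ x i) := logLik_zero_le _ _
      _ ≤ log 2 - ε * R := by rw [min_comm]; linarith

end Likelihood

lemma tendsto_L_cocompact_atBot {n d q : ℕ} {y : Fin n → ℝ} (x : Fin n → Fin d → ℝ)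
    (z : Fin n → Fin q → ℝ) (hy : ∀ i, y i ∈ Set.Icc 0 1) {ε : ℝ} (hε : 0 < ε)
    (hsep : DoubleNonSeparated y x z ε) :
    Tendsto (fun p : (Fin d → ℝ) × (Fin q → ℝ) => L y x z p.1 p.2) (cocompact _) atBot := by
  have hlin : Tendsto (fun p : (Fin d → ℝ) × (Fin q → ℝ) => log 2 - ε * ‖p‖) (cocompact _) atBot :=
    tendsto_atBot_add_const_left _ _
      (tendsto_neg_atTop_atBot.comp (tendsto_norm_cocompact_atTop.const_mul_atTop hε))
  refine tendsto_atBot_mono (fun p => ?_) hlin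
  calc L y x z p.1 p.2 ≤ log 2 - ε * √((∑ l, p.1 l ^ 2) + ∑ l, p.2 l ^ 2) :=
        L_le_log_two_sub_mul_sqrt x z hy hsep p.1 p.2
    _ ≤ log 2 - ε * ‖p‖ := by gcongr; exact norm_prod_le_sqrt_sum_sq p

theorem mle_exists_under_non_separation {n d q : ℕ}
    (y : Fin n → ℝ) (x : Fin n → Fin d → ℝ) (z : Fin n → Fin q → ℝ)
    (hy : ∀ i, y i = 0 ∨ y i = 1) (ε : ℝ) (hε : 0 < ε)
    (hnonsep : ∀ (v : Fin d → ℝ) (w : Fin q → ℝ),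
      (∑ l, (v l) ^ 2) + (∑ l, (w l) ^ 2) = 1 →
      (∃ i, y i = 1 ∧ (∑ l, v l * x i l) + (∑ l, w l * z i l) ≤ -ε) ∨
      (∃ i, y i = 0 ∧ ε ≤ min (∑ l, v l * x i l) (∑ l, w l * z i l))) :
    ∃ (β : Fin d → ℝ) (γ : Fin q → ℝ), ∀ (β' : Fin d → ℝ) (γ' : Fin q → ℝ),
      L y x z β' γ' ≤ L y x z β γ := by
  have hy' : ∀ i, y i ∈ Set.Icc 0 1 := fun i => by rcases hy i with h | h <;> simp [h]
  obtain ⟨p, hp⟩ := (continuous_L y x z).exists_forall_ge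
    (tendsto_L_cocompact_atBot x z hy' hε hnonsep)
  exact ⟨p.1, p.2, fun β' γ' => hp (β', γ')⟩
end
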